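/- For a vector field X on M_n with components X^h, the covariant derivatives with respect to the metric connection ∇̃ of the synectic metric of the vertical, complete and horizontal lifts of X have the following components in induced coordinates: ∇̃_j (^V X)^{h̄} = ∇_j X^h with all other components of ∇̃ ^V X zero; ∇̃_j (^C X)^h = ∇̃_{j̄} (^C X)^{h̄} = ∇_j X^h, ∇̃_j (^C X)^{h̄} = y^s ∂_s(∇_j X^h) + H^h_{jm} X^m − y^k R_{kjm}{}^h X^m, ∇̃_{j̄} (^C X)^h = 0; ∇̃_j (^H X)^h = ∇_j X^h, ∇̃_j (^H X)^{h̄} = −y^s Γ^h_{si} (∇_j X^i) + H^h_{jm} X^m, ∇̃_{j̄} (^H X)^h = ∇̃_{j̄} (^H X)^{h̄} = 0. -/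

import Mathlib

open scoped BigOperators

noncomputable section

namespace Synectic

variable {n : ℕ}

/-- Partial derivative `∂_j f` of a real-valued function on `ℝⁿ` (global chart of `M_n`). -/
def pd (f : (Fin n → ℝ) → ℝ) (j : Fin n) (x : Fin n → ℝ) : ℝ :=
  fderiv ℝ f x (Pi.single j 1)

/-- Christoffel symbols `Γ^h_{ji}` of the metric `g` with inverse `ginv`. -/
def Christoffel (g ginv : (Fin n → ℝ) → Fin n → Fin n → ℝ) (h j i : Fin n)
    (x : Fin n → ℝ) : ℝ :=
  (1 / 2) * ∑ s, ginv x h s *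
    (pd (fun z => g z s i) j x + pd (fun z => g z j s) i x - pd (fun z => g z j i) s x)

/-- Covariant derivative `∇_j X^h` of a vector field. -/
def covVec (g ginv : (Fin n → ℝ) → Fin n → Fin n → ℝ)
    (X : (Fin n → ℝ) → Fin n → ℝ) (j h : Fin n) (x : Fin n → ℝ) : ℝ :=
  pd (fun z => X z h) j x + ∑ i, Christoffel g ginv h j i x * X x i

/-- Covariant derivative `∇_j ω_i` of a covector field. -/
def covCov (g ginv : (Fin n → ℝ) → Fin n → Fin n → ℝ)
    (ω : (Fin n → ℝ) → Fin n → ℝ) (j i : Fin n) (x : Fin n → ℝ) : ℝ :=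
  pd (fun z => ω z i) j x - ∑ k, Christoffel g ginv k j i x * ω x k

/-- Covariant derivative `∇_s a_{ji}` of a `(0,2)`-tensor field. -/
def cov2 (g ginv : (Fin n → ℝ) → Fin n → Fin n → ℝ)
    (a : (Fin n → ℝ) → Fin n → Fin n → ℝ) (s j i : Fin n) (x : Fin n → ℝ) : ℝ :=
  pd (fun z => a z j i) s x - ∑ l, Christoffel g ginv l s j x * a x l i
    - ∑ l, Christoffel g ginv l s i x * a x j l

/-- The tensor `H^h_{ji} = (1/2) g^{hs} (∇_j a_{si} + ∇_i a_{js} - ∇_s a_{ji})`. -/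
def Hcoef (g ginv a : (Fin n → ℝ) → Fin n → Fin n → ℝ) (h j i : Fin n)
    (x : Fin n → ℝ) : ℝ :=
  (1 / 2) * ∑ s, ginv x h s *
    (cov2 g ginv a j s i x + cov2 g ginv a i j s x - cov2 g ginv a s j i x)

/-- Components `R_{kji}{}^h` of the Riemann curvature tensor of `g`. -/
def Riem (g ginv : (Fin n → ℝ) → Fin n → Fin n → ℝ) (k j i h : Fin n)
    (x : Fin n → ℝ) : ℝ :=
  pd (fun z => Christoffel g ginv h j i z) k x - pd (fun z => Christoffel g ginv h k i z) j x
    + ∑ m, Christoffel g ginv m j i x * Christoffel g ginv h k m x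
    - ∑ m, Christoffel g ginv m k i x * Christoffel g ginv h j m x

/-- The covector field `X_i = g_{ih} X^h` associated with a vector field `X`. -/
def lower (g : (Fin n → ℝ) → Fin n → Fin n → ℝ) (X : (Fin n → ℝ) → Fin n → ℝ)
    (x : Fin n → ℝ) (i : Fin n) : ℝ :=
  ∑ h, g x i h * X x h

/-- A point of the tangent bundle `T(M_n)` in induced coordinates `(xʰ, yʰ)`. -/
abbrev TPt (n : ℕ) := (Fin n → ℝ) × (Fin n → ℝ)

/-- Index type for induced coordinates on `T(M_n)`: `inl` = base indices, `inr` = fibre indices. -/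
abbrev Idx (n : ℕ) := Fin n ⊕ Fin n

/-- Coordinate directions on `T(M_n)`. -/
def eIdx : Idx n → TPt n
  | Sum.inl j => (Pi.single j 1, 0)
  | Sum.inr j => (0, Pi.single j 1)

/-- Partial derivative `∂_A f` on `T(M_n)` (`∂_j` for `A = inl j`, `∂_{j̄}` for `A = inr j`). -/
def pdT (f : TPt n → ℝ) (A : Idx n) (p : TPt n) : ℝ :=
  fderiv ℝ f p (eIdx A)

/-- Covariant components of the synectic metric `^S g = ^C g + ^V a` on `T(M_n)`. -/
def synMetric (g a : (Fin n → ℝ) → Fin n → Fin n → ℝ) (p : TPt n) :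
    Idx n → Idx n → ℝ
  | Sum.inl j, Sum.inl i => a p.1 j i + ∑ s, p.2 s * pd (fun z => g z j i) s p.1
  | Sum.inl j, Sum.inr i => g p.1 j i
  | Sum.inr j, Sum.inl i => g p.1 j i
  | Sum.inr _, Sum.inr _ => 0

/-- Contravariant components of the synectic metric. -/
def synMetricInv (ginv a : (Fin n → ℝ) → Fin n → Fin n → ℝ) (p : TPt n) :
    Idx n → Idx n → ℝ
  | Sum.inl _, Sum.inl _ => 0
  | Sum.inl j, Sum.inr i => ginv p.1 j i
  | Sum.inr j, Sum.inl i => ginv p.1 j i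
  | Sum.inr j, Sum.inr i =>
      ∑ s, p.2 s * pd (fun z => ginv z j i) s p.1
        - ∑ t, ∑ s, ginv p.1 j t * a p.1 t s * ginv p.1 s i

/-- Vertical lift `^V X` of a vector field, with components `(0, Xʰ)`. -/
def vlift (X : (Fin n → ℝ) → Fin n → ℝ) (p : TPt n) : Idx n → ℝ
  | Sum.inl _ => 0
  | Sum.inr h => X p.1 h

/-- Complete lift `^C X` of a vector field, with components `(Xʰ, yˢ ∂_s Xʰ)`. -/
def clift (X : (Fin n → ℝ) → Fin n → ℝ) (p : TPt n) : Idx n → ℝ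
  | Sum.inl h => X p.1 h
  | Sum.inr h => ∑ s, p.2 s * pd (fun z => X z h) s p.1

/-- Horizontal lift `^H X` of a vector field, with components `(Xʰ, -yˢ Γʰ_{si} Xⁱ)`. -/
def hlift (g ginv : (Fin n → ℝ) → Fin n → Fin n → ℝ)
    (X : (Fin n → ℝ) → Fin n → ℝ) (p : TPt n) : Idx n → ℝ
  | Sum.inl h => X p.1 h
  | Sum.inr h => -∑ s, ∑ i, p.2 s * Christoffel g ginv h s i p.1 * X p.1 i

/-- Components of the Lie derivative `(𝓛_V G)_{AB}` of a metric `G` on `T(M_n)` along `V`. -/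
def lieDerivT (G : TPt n → Idx n → Idx n → ℝ) (V : TPt n → Idx n → ℝ)
    (A B : Idx n) (p : TPt n) : ℝ :=
  ∑ C, (V p C * pdT (fun q => G q A B) C p
      + G p A C * pdT (fun q => V q C) B p
      + G p C B * pdT (fun q => V q C) A p)

/-- `V` is a Killing vector field of the metric `G` on `T(M_n)`. -/
def IsKillingT (G : TPt n → Idx n → Idx n → ℝ) (V : TPt n → Idx n → ℝ) : Prop :=
  ∀ p A B, lieDerivT G V A B p = 0

/-- Christoffel symbols of a metric `G` (with inverse `Ginv`) on `T(M_n)`. -/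
def ChristoffelT (G Ginv : TPt n → Idx n → Idx n → ℝ) (A B C : Idx n) (p : TPt n) : ℝ :=
  (1 / 2) * ∑ D, Ginv p A D *
    (pdT (fun q => G q D C) B p + pdT (fun q => G q B D) C p - pdT (fun q => G q B C) D p)

/-- Covariant derivative `∇_B ω_A` on `T(M_n)` of a covector field w.r.t. the
Levi-Civita connection of `(G, Ginv)`. -/
def covCovT (G Ginv : TPt n → Idx n → Idx n → ℝ) (ω : TPt n → Idx n → ℝ)
    (B A : Idx n) (p : TPt n) : ℝ :=
  pdT (fun q => ω q A) B p - ∑ C, ChristoffelT G Ginv C B A p * ω p C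

/-- Covariant derivative `∇_B V^A` on `T(M_n)` of a vector field w.r.t. a linear
connection given by its components `Conn^A_{BC}`. -/
def covVecT (Conn : Idx n → Idx n → Idx n → TPt n → ℝ) (V : TPt n → Idx n → ℝ)
    (B A : Idx n) (p : TPt n) : ℝ :=
  pdT (fun q => V q A) B p + ∑ C, Conn A B C p * V p C

/-- Components `Γ̃^A_{BC}` of the metric connection `∇̃` of the synectic metric. -/
def GammaTilde (g ginv a : (Fin n → ℝ) → Fin n → Fin n → ℝ) :
    Idx n → Idx n → Idx n → TPt n → ℝ
  | Sum.inl h, Sum.inl j, Sum.inl i => fun p => Christoffel g ginv h j i p.1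
  | Sum.inr h, Sum.inr j, Sum.inl i => fun p => Christoffel g ginv h j i p.1
  | Sum.inr h, Sum.inl j, Sum.inr i => fun p => Christoffel g ginv h j i p.1
  | Sum.inr h, Sum.inl j, Sum.inl i => fun p =>
      (∑ t, p.2 t * pd (fun z => Christoffel g ginv h j i z) t p.1)
        + Hcoef g ginv a h j i p.1 - ∑ k, p.2 k * Riem g ginv k j i h p.1
  | _, _, _ => fun _ => 0

/-- Components `Γ̄^A_{BC}` of the metric connection `∇̄` of the complete lift metric `^C g`
(the horizontal lift `^H ∇` of the Levi-Civita connection of `g`). -/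
def GammaBar (g ginv : (Fin n → ℝ) → Fin n → Fin n → ℝ) :
    Idx n → Idx n → Idx n → TPt n → ℝ
  | Sum.inl h, Sum.inl j, Sum.inl i => fun p => Christoffel g ginv h j i p.1
  | Sum.inr h, Sum.inr j, Sum.inl i => fun p => Christoffel g ginv h j i p.1
  | Sum.inr h, Sum.inl j, Sum.inr i => fun p => Christoffel g ginv h j i p.1
  | Sum.inr h, Sum.inl j, Sum.inl i => fun p =>
      (∑ t, p.2 t * pd (fun z => Christoffel g ginv h j i z) t p.1)
        - ∑ k, p.2 k * Riem g ginv k j i h p.1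
  | _, _, _ => fun _ => 0

/-- Vertical lift `^V H` of the `(1,2)`-tensor field `H`, as a difference of connections. -/
def vertH (g ginv a : (Fin n → ℝ) → Fin n → Fin n → ℝ) :
    Idx n → Idx n → Idx n → TPt n → ℝ
  | Sum.inr h, Sum.inl j, Sum.inl i => fun p => Hcoef g ginv a h j i p.1
  | _, _, _ => fun _ => 0

/-- Covector field associated with a vector field `V` on `(T(M_n), ^S g)`. -/
def assocCov (g a : (Fin n → ℝ) → Fin n → Fin n → ℝ) (V : TPt n → Idx n → ℝ)
    (p : TPt n) (C : Idx n) : ℝ :=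
  ∑ A, synMetric g a p C A * V p A

/-- The vertical vector field `ιC` with components `(0, yⁱ C_iᵏ)`. -/
def iotaT (C : (Fin n → ℝ) → Fin n → Fin n → ℝ) (p : TPt n) : Idx n → ℝ
  | Sum.inl _ => 0
  | Sum.inr k => ∑ i, p.2 i * C p.1 i k

/-- `X` is a Killing vector field of `(M_n, g)`: `∇_j X_i + ∇_i X_j = 0`. -/
def IsKillingBase (g ginv : (Fin n → ℝ) → Fin n → Fin n → ℝ)
    (X : (Fin n → ℝ) → Fin n → ℝ) : Prop :=
  ∀ x j i, covCov g ginv (lower g X) j i x + covCov g ginv (lower g X) i j x = 0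

/-- `V` is a harmonic vector field of `(T(M_n), ^S g)`: its associated covector field is
closed and coclosed w.r.t. the Levi-Civita connection of the synectic metric. -/
def IsHarmonicT (g ginv a : (Fin n → ℝ) → Fin n → Fin n → ℝ)
    (V : TPt n → Idx n → ℝ) : Prop :=
  (∀ p B A, covCovT (synMetric g a) (synMetricInv ginv a) (assocCov g a V) B A p
      - covCovT (synMetric g a) (synMetricInv ginv a) (assocCov g a V) A B p = 0)
  ∧ (∀ p, ∑ B, ∑ A, synMetricInv ginv a p B A *
      covCovT (synMetric g a) (synMetricInv ginv a) (assocCov g a V) B A p = 0)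

/-- `X` is a harmonic vector field of `(M_n, g)`: its associated `1`-form is closed and
coclosed. -/
def IsHarmonicBase (g ginv : (Fin n → ℝ) → Fin n → Fin n → ℝ)
    (X : (Fin n → ℝ) → Fin n → ℝ) : Prop :=
  (∀ x j i, covCov g ginv (lower g X) j i x - covCov g ginv (lower g X) i j x = 0)
  ∧ (∀ x, ∑ j, ∑ i, ginv x j i * covCov g ginv (lower g X) j i x = 0)

/-- A vector field on `T(M_n)` is parallel w.r.t. a linear connection `Conn` if its covariant
derivative vanishes identically. -/
def IsParallelT (Conn : Idx n → Idx n → Idx n → TPt n → ℝ) (V : TPt n → Idx n → ℝ) : Prop :=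
  ∀ p B A, covVecT Conn V B A p = 0

/-- `X` is parallel on `M_n`: `∇_j Xʰ = 0`. -/
def IsParallelBase (g ginv : (Fin n → ℝ) → Fin n → Fin n → ℝ)
    (X : (Fin n → ℝ) → Fin n → ℝ) : Prop :=
  ∀ x j h, covVec g ginv X j h x = 0


/-! ### Auxiliary calculus lemmas -/

section Aux
variable {n : ℕ}

lemma contDiff_pd {f : (Fin n → ℝ) → ℝ} (hf : ContDiff ℝ (⊤ : ℕ∞) f) (j : Fin n) :
    ContDiff ℝ (⊤ : ℕ∞) (pd f j) :=
  (hf.fderiv_right (by simp)).clm_apply contDiff_const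

lemma pd_add {f g : (Fin n → ℝ) → ℝ} {x : Fin n → ℝ} (hf : DifferentiableAt ℝ f x)
    (hg : DifferentiableAt ℝ g x) (j : Fin n) :
    pd (fun z => f z + g z) j x = pd f j x + pd g j x := by
  simp [pd, fderiv_fun_add hf hg]

lemma pd_mul {f g : (Fin n → ℝ) → ℝ} {x : Fin n → ℝ} (hf : DifferentiableAt ℝ f x)
    (hg : DifferentiableAt ℝ g x) (j : Fin n) :
    pd (fun z => f z * g z) j x = pd f j x * g x + f x * pd g j x := by
  simp [pd, fderiv_fun_mul hf hg]; ring

lemma pd_sum {ι : Type*} (s : Finset ι) {f : ι → (Fin n → ℝ) → ℝ} {x : Fin n → ℝ}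
    (hf : ∀ i ∈ s, DifferentiableAt ℝ (f i) x) (j : Fin n) :
    pd (fun z => ∑ i ∈ s, f i z) j x = ∑ i ∈ s, pd (f i) j x := by
  simp [pd, fderiv_fun_sum hf]

lemma pd_comm {f : (Fin n → ℝ) → ℝ} (hf : ContDiff ℝ (⊤ : ℕ∞) f) (j s : Fin n) (x : Fin n → ℝ) :
    pd (pd f j) s x = pd (pd f s) j x := by
  have hsymm : IsSymmSndFDerivAt ℝ f x := (hf.contDiffAt).isSymmSndFDerivAt (by rw [minSmoothness_of_isRCLikeNormedField]; exact WithTop.coe_le_coe.mpr le_top)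
  have hd : DifferentiableAt ℝ (fun z => fderiv ℝ f z) x :=
    (hf.fderiv_right (m := 1) (WithTop.coe_le_coe.mpr le_top)).differentiable one_ne_zero x
  have expand : ∀ (v : Fin n → ℝ) (k : Fin n),
      pd (fun z => fderiv ℝ f z v) k x = fderiv ℝ (fderiv ℝ f) x (Pi.single k 1) v := by
    intro v k
    have := fderiv_clm_apply (c := fun z => fderiv ℝ f z) (u := fun _ => v) hd
      (differentiableAt_const v)
    simp [pd, this]
  show pd (fun z => fderiv ℝ f z (Pi.single j 1)) s x
      = pd (fun z => fderiv ℝ f z (Pi.single s 1)) j x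
  rw [expand, expand]
  exact hsymm _ _

lemma pdT_base {f : (Fin n → ℝ) → ℝ} {p : TPt n} (hf : DifferentiableAt ℝ f p.1)
    (A : Idx n) :
    pdT (fun q : TPt n => f q.1) A p
      = match A with
        | Sum.inl j => pd f j p.1
        | Sum.inr _ => 0 := by
  have h : fderiv ℝ (fun q : TPt n => f q.1) p
      = (fderiv ℝ f p.1).comp (ContinuousLinearMap.fst ℝ (Fin n → ℝ) (Fin n → ℝ)) := by
    have := fderiv_comp (𝕜 := ℝ) p hf differentiableAt_fst
    rw [fderiv_fst] at this; exact this
  cases A with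
  | inl j => simp [pdT, h, eIdx, pd]
  | inr j => simp [pdT, h, eIdx]

lemma pdT_base_inl {f : (Fin n → ℝ) → ℝ} {p : TPt n} (hf : DifferentiableAt ℝ f p.1)
    (j : Fin n) : pdT (fun q : TPt n => f q.1) (Sum.inl j) p = pd f j p.1 := pdT_base hf _

lemma pdT_base_inr {f : (Fin n → ℝ) → ℝ} {p : TPt n} (hf : DifferentiableAt ℝ f p.1)
    (j : Fin n) : pdT (fun q : TPt n => f q.1) (Sum.inr j) p = 0 := pdT_base hf _

lemma pdT_fiber_coord (s : Fin n) (p : TPt n) (A : Idx n) :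
    pdT (fun q : TPt n => q.2 s) A p
      = match A with
        | Sum.inl _ => 0
        | Sum.inr j => if s = j then 1 else 0 := by
  have h : fderiv ℝ (fun q : TPt n => q.2 s) p
      = (ContinuousLinearMap.proj s).comp (ContinuousLinearMap.snd ℝ (Fin n → ℝ) (Fin n → ℝ)) :=
    (((ContinuousLinearMap.proj (R := ℝ) (φ := fun _ : Fin n => ℝ) s).comp
      (ContinuousLinearMap.snd ℝ (Fin n → ℝ) (Fin n → ℝ))).hasFDerivAt (x := p)).fderiv
  cases A with
  | inl j => simp [pdT, h, eIdx]
  | inr j => simp [pdT, h, eIdx, Pi.single_apply]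

lemma pdT_mul {f g : TPt n → ℝ} {p : TPt n} (hf : DifferentiableAt ℝ f p)
    (hg : DifferentiableAt ℝ g p) (A : Idx n) :
    pdT (fun q => f q * g q) A p = pdT f A p * g p + f p * pdT g A p := by
  simp [pdT, fderiv_fun_mul hf hg]; ring

lemma pdT_sum {ι : Type*} (s : Finset ι) {f : ι → TPt n → ℝ} {p : TPt n}
    (hf : ∀ i ∈ s, DifferentiableAt ℝ (f i) p) (A : Idx n) :
    pdT (fun q => ∑ i ∈ s, f i q) A p = ∑ i ∈ s, pdT (f i) A p := by
  simp [pdT, fderiv_fun_sum hf]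

lemma pdT_neg {f : TPt n → ℝ} {p : TPt n} (A : Idx n) :
    pdT (fun q => -f q) A p = - pdT f A p := by
  simp [pdT, fderiv_neg]

lemma pdT_zero {p : TPt n} (A : Idx n) :
    pdT (fun _ : TPt n => (0 : ℝ)) A p = 0 := by
  simp [pdT]

lemma diffAt_base {f : (Fin n → ℝ) → ℝ} {p : TPt n} (hf : DifferentiableAt ℝ f p.1) :
    DifferentiableAt ℝ (fun q : TPt n => f q.1) p := hf.comp p differentiableAt_fst

lemma diffAt_fiber (s : Fin n) (p : TPt n) :
    DifferentiableAt ℝ (fun q : TPt n => q.2 s) p :=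
  ((ContinuousLinearMap.proj (R := ℝ) (φ := fun _ : Fin n => ℝ) s).comp
      (ContinuousLinearMap.snd ℝ (Fin n → ℝ) (Fin n → ℝ))).differentiableAt

lemma pdT_fiberSum {f : (Fin n → ℝ) → Fin n → ℝ} {p : TPt n}
    (hf : ∀ s, DifferentiableAt ℝ (fun z => f z s) p.1) (A : Idx n) :
    pdT (fun q : TPt n => ∑ s, q.2 s * f q.1 s) A p
      = match A with
        | Sum.inl j => ∑ s, p.2 s * pd (fun z => f z s) j p.1
        | Sum.inr j => f p.1 j := by
  have hterm : ∀ s : Fin n, pdT (fun q : TPt n => q.2 s * f q.1 s) A p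
      = pdT (fun q : TPt n => q.2 s) A p * f p.1 s
        + p.2 s * pdT (fun q : TPt n => f q.1 s) A p :=
    fun s => pdT_mul (diffAt_fiber s p) (diffAt_base (hf s)) A
  rw [pdT_sum Finset.univ (fun s _ => ((diffAt_fiber s p).fun_mul (diffAt_base (hf s)))) A]
  cases A with
  | inl j =>
      simp only [hterm, pdT_fiber_coord, pdT_base (hf _)]
      simp
  | inr j =>
      simp only [hterm, pdT_fiber_coord, pdT_base (hf _)]
      simp [Finset.sum_ite_eq, mul_comm]

lemma contDiff_Christoffel {g ginv : (Fin n → ℝ) → Fin n → Fin n → ℝ}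
    (hg : ∀ j i, ContDiff ℝ (⊤ : ℕ∞) fun z => g z j i)
    (hginv : ∀ j i, ContDiff ℝ (⊤ : ℕ∞) fun z => ginv z j i) (h j i : Fin n) :
    ContDiff ℝ (⊤ : ℕ∞) (fun z => Christoffel g ginv h j i z) := by
  unfold Christoffel
  exact contDiff_const.mul (ContDiff.sum fun s _ =>
    (hginv h s).mul (((contDiff_pd (hg s i) j).add (contDiff_pd (hg j s) i)).sub
      (contDiff_pd (hg j i) s)))

end Aux

section Aux2
variable {n : ℕ}

lemma pdT_fiberSum_inl {f : (Fin n → ℝ) → Fin n → ℝ} {p : TPt n}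
    (hf : ∀ s, DifferentiableAt ℝ (fun z => f z s) p.1) (j : Fin n) :
    pdT (fun q : TPt n => ∑ s, q.2 s * f q.1 s) (Sum.inl j) p
      = ∑ s, p.2 s * pd (fun z => f z s) j p.1 := pdT_fiberSum hf _

lemma pdT_fiberSum_inr {f : (Fin n → ℝ) → Fin n → ℝ} {p : TPt n}
    (hf : ∀ s, DifferentiableAt ℝ (fun z => f z s) p.1) (j : Fin n) :
    pdT (fun q : TPt n => ∑ s, q.2 s * f q.1 s) (Sum.inr j) p = f p.1 j := pdT_fiberSum hf _

end Aux2

section Alg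
variable {n : ℕ}

lemma rot3 (F : Fin n → Fin n → Fin n → ℝ) :
    ∑ a, ∑ b, ∑ c, F a b c = ∑ b, ∑ c, ∑ a, F a b c := by
  rw [Finset.sum_comm]
  exact Finset.sum_congr rfl fun b _ => Finset.sum_comm

lemma swap13 (F : Fin n → Fin n → Fin n → ℝ) :
    ∑ a, ∑ b, ∑ c, F a b c = ∑ c, ∑ b, ∑ a, F a b c := by
  rw [rot3, rot3 fun b c a => F a b c]
  exact Finset.sum_congr rfl fun c _ => Finset.sum_comm

lemma alg7 (y D H X Γ : Fin n → ℝ) (PΓ R PX : Fin n → Fin n → ℝ) :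
    ∑ s, y s * D s
      + (∑ i, ((∑ t, y t * PΓ i t) + H i - ∑ k, y k * R k i) * X i
      + ∑ i, Γ i * ∑ s, y s * PX i s)
    = ∑ s, y s * (D s + ∑ i, (PΓ i s * X i + Γ i * PX i s))
      + ∑ m, H m * X m - ∑ k, ∑ m, y k * R k m * X m := by
  have e1 : ∑ i, (∑ t : Fin n, y t * PΓ i t) * X i = ∑ s, ∑ i, y s * (PΓ i s * X i) := by
    rw [Finset.sum_comm]
    exact Finset.sum_congr rfl fun t _ => by
      rw [Finset.sum_mul]
      exact Finset.sum_congr rfl fun i _ => by ring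
  have e2 : ∑ i, (∑ k : Fin n, y k * R k i) * X i = ∑ k, ∑ m, y k * R k m * X m := by
    rw [Finset.sum_comm]
    exact Finset.sum_congr rfl fun k _ => by rw [Finset.sum_mul]
  have e3 : ∑ x, ∑ i, Γ x * (y i * PX x i) = ∑ x, ∑ i, y x * (Γ i * PX i x) := by
    rw [Finset.sum_comm]
    exact Finset.sum_congr rfl fun t _ => Finset.sum_congr rfl fun i _ => by ring
  simp only [add_mul, sub_mul, mul_add, Finset.mul_sum, Finset.sum_add_distrib,
    Finset.sum_sub_distrib]
  rw [e1, e2, e3]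
  ring

lemma alg10 (y X H : Fin n → ℝ) (G : Fin n → Fin n → Fin n → ℝ)
    (D : Fin n → Fin n → Fin n → Fin n → ℝ) (PX : Fin n → Fin n → ℝ) (h j : Fin n) :
    -∑ s, y s * (∑ i, (D h s i j * X i + G h s i * PX i j))
      + (∑ i, ((∑ t, y t * D h j i t) + H i
          - ∑ k, y k * (D h j i k - D h k i j
              + ∑ m, G m j i * G h k m - ∑ m, G m k i * G h j m)) * X i
      + ∑ i, G h j i * (-(∑ s, ∑ m, y s * G i s m * X m)))
    = -(∑ s, ∑ i, y s * G h s i * (PX i j + ∑ m, G i j m * X m))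
      + ∑ m, H m * X m := by
  have ea : ∑ x, (∑ k : Fin n, y k * D h k x j) * X x = ∑ k, ∑ x, y k * (D h k x j * X x) := by
    rw [Finset.sum_comm]
    exact Finset.sum_congr rfl fun k _ => by
      rw [Finset.sum_mul]
      exact Finset.sum_congr rfl fun x _ => by ring
  have eb : ∑ x, ∑ i, y x * (G h x i * PX i j) = ∑ x, ∑ x_1, y x * G h x x_1 * PX x_1 j :=
    Finset.sum_congr rfl fun x _ => Finset.sum_congr rfl fun i _ => by ring
  have ec : ∑ x, (∑ x_1, ∑ i : Fin n, y x_1 * (G i j x * G h x_1 i)) * X x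
      = ∑ x, ∑ x_1, ∑ i, y x * G h x x_1 * (G x_1 j i * X i) := by
    have e : ∑ x, (∑ x_1, ∑ i : Fin n, y x_1 * (G i j x * G h x_1 i)) * X x
        = ∑ x, ∑ x_1, ∑ i : Fin n, y x_1 * (G i j x * G h x_1 i) * X x :=
      Finset.sum_congr rfl fun x _ => by
        rw [Finset.sum_mul]
        exact Finset.sum_congr rfl fun x1 _ => Finset.sum_mul ..
    rw [e, rot3]
    exact Finset.sum_congr rfl fun s _ => Finset.sum_congr rfl fun a _ =>
      Finset.sum_congr rfl fun b _ => by ring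
  have ed : ∑ x, (∑ x_1, ∑ i : Fin n, y x_1 * (G i x_1 x * G h j i)) * X x
      = ∑ x, ∑ x_1, ∑ i, G h j x * (y x_1 * G x x_1 i * X i) := by
    have e : ∑ x, (∑ x_1, ∑ i : Fin n, y x_1 * (G i x_1 x * G h j i)) * X x
        = ∑ x, ∑ x_1, ∑ i : Fin n, y x_1 * (G i x_1 x * G h j i) * X x :=
      Finset.sum_congr rfl fun x _ => by
        rw [Finset.sum_mul]
        exact Finset.sum_congr rfl fun x1 _ => Finset.sum_mul ..
    rw [e, swap13]
    exact Finset.sum_congr rfl fun a _ => Finset.sum_congr rfl fun s _ =>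
      Finset.sum_congr rfl fun b _ => by ring
  simp only [add_mul, sub_mul, mul_add, mul_sub, mul_neg, neg_mul, Finset.mul_sum,
    Finset.sum_add_distrib, Finset.sum_sub_distrib, Finset.sum_neg_distrib, neg_add, neg_sub,
    neg_neg]
  rw [ea, eb, ec, ed]
  ring

end Alg
/-- Components of the covariant derivatives, w.r.t. the metric connection
`∇̃` of the synectic metric, of the vertical, complete and horizontal lifts of `X`. -/
theorem cov_deriv_lifts_metric_connection {n : ℕ}
    (g ginv a : (Fin n → ℝ) → Fin n → Fin n → ℝ)
    (X : (Fin n → ℝ) → Fin n → ℝ)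
    (hg : ∀ j i, ContDiff ℝ (⊤ : ℕ∞) fun z => g z j i)
    (hgsymm : ∀ x j i, g x j i = g x i j)
    (hpos : ∀ (x v : Fin n → ℝ), v ≠ 0 → 0 < ∑ j, ∑ i, g x j i * v j * v i)
    (hginv : ∀ j i, ContDiff ℝ (⊤ : ℕ∞) fun z => ginv z j i)
    (hinv : ∀ x j k, ∑ i, g x j i * ginv x i k = if j = k then (1 : ℝ) else 0)
    (ha : ∀ j i, ContDiff ℝ (⊤ : ℕ∞) fun z => a z j i)
    (hasymm : ∀ x j i, a x j i = a x i j)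
    (hX : ∀ h, ContDiff ℝ (⊤ : ℕ∞) fun z => X z h)
    : ∀ (p : TPt n) (j h : Fin n),
      -- vertical lift
      covVecT (GammaTilde g ginv a) (vlift X) (Sum.inl j) (Sum.inr h) p
          = covVec g ginv X j h p.1
      ∧ covVecT (GammaTilde g ginv a) (vlift X) (Sum.inl j) (Sum.inl h) p = 0
      ∧ covVecT (GammaTilde g ginv a) (vlift X) (Sum.inr j) (Sum.inl h) p = 0
      ∧ covVecT (GammaTilde g ginv a) (vlift X) (Sum.inr j) (Sum.inr h) p = 0
      -- complete lift
      ∧ covVecT (GammaTilde g ginv a) (clift X) (Sum.inl j) (Sum.inl h) p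
          = covVec g ginv X j h p.1
      ∧ covVecT (GammaTilde g ginv a) (clift X) (Sum.inr j) (Sum.inr h) p
          = covVec g ginv X j h p.1
      ∧ covVecT (GammaTilde g ginv a) (clift X) (Sum.inl j) (Sum.inr h) p
          = (∑ s, p.2 s * pd (fun z => covVec g ginv X j h z) s p.1)
            + (∑ m, Hcoef g ginv a h j m p.1 * X p.1 m)
            - ∑ k, ∑ m, p.2 k * Riem g ginv k j m h p.1 * X p.1 m
      ∧ covVecT (GammaTilde g ginv a) (clift X) (Sum.inr j) (Sum.inl h) p = 0
      -- horizontal lift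
      ∧ covVecT (GammaTilde g ginv a) (hlift g ginv X) (Sum.inl j) (Sum.inl h) p
          = covVec g ginv X j h p.1
      ∧ covVecT (GammaTilde g ginv a) (hlift g ginv X) (Sum.inl j) (Sum.inr h) p
          = -(∑ s, ∑ i, p.2 s * Christoffel g ginv h s i p.1 * covVec g ginv X j i p.1)
            + ∑ m, Hcoef g ginv a h j m p.1 * X p.1 m
      ∧ covVecT (GammaTilde g ginv a) (hlift g ginv X) (Sum.inr j) (Sum.inl h) p = 0
      ∧ covVecT (GammaTilde g ginv a) (hlift g ginv X) (Sum.inr j) (Sum.inr h) p = 0 := by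
  intro p j h
  have hXd : ∀ m, DifferentiableAt ℝ (fun z => X z m) p.1 :=
    fun m => ((hX m).differentiable (by simp)).differentiableAt
  have hΓd : ∀ b c d, DifferentiableAt ℝ (fun z => Christoffel g ginv b c d z) p.1 :=
    fun b c d => ((contDiff_Christoffel hg hginv b c d).differentiable (by simp)).differentiableAt
  have hpdXd : ∀ m s, DifferentiableAt ℝ (fun z => pd (fun w => X w m) s z) p.1 :=
    fun m s => ((contDiff_pd (hX m) s).differentiable (by simp)).differentiableAt
  have hΓXd : ∀ b c, DifferentiableAt ℝ (fun z => ∑ i, Christoffel g ginv b c i z * X z i) p.1 :=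
    fun b c => DifferentiableAt.fun_sum fun i _ => (hΓd b c i).mul (hXd i)
  have hhl : ∀ m, (fun q : TPt n => hlift g ginv X q (Sum.inr m))
      = fun q : TPt n => -∑ s, q.2 s * (∑ i, Christoffel g ginv m s i q.1 * X q.1 i) := by
    intro m; funext q; simp [hlift, Finset.mul_sum, mul_assoc]
  refine ⟨?_, ?_, ?_, ?_, ?_, ?_, ?_, ?_, ?_, ?_, ?_, ?_⟩
  · -- V : inl j, inr h
    rw [covVecT, show (fun q : TPt n => vlift X q (Sum.inr h)) = fun q : TPt n => X q.1 h
      from rfl, pdT_base_inl (hXd h), Fintype.sum_sum_type]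
    simp [GammaTilde, vlift, covVec]
  · -- V : inl j, inl h
    rw [covVecT, show (fun q : TPt n => vlift X q (Sum.inl h)) = fun _ => (0:ℝ) from rfl,
      pdT_zero, Fintype.sum_sum_type]
    simp [GammaTilde, vlift]
  · -- V : inr j, inl h
    rw [covVecT, show (fun q : TPt n => vlift X q (Sum.inl h)) = fun _ => (0:ℝ) from rfl,
      pdT_zero, Fintype.sum_sum_type]
    simp [GammaTilde, vlift]
  · -- V : inr j, inr h
    rw [covVecT, show (fun q : TPt n => vlift X q (Sum.inr h)) = fun q : TPt n => X q.1 h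
      from rfl, pdT_base_inr (hXd h), Fintype.sum_sum_type]
    simp [GammaTilde, vlift]
  · -- C : inl j, inl h
    rw [covVecT, show (fun q : TPt n => clift X q (Sum.inl h)) = fun q : TPt n => X q.1 h
      from rfl, pdT_base_inl (hXd h), Fintype.sum_sum_type]
    simp [GammaTilde, clift, covVec]
  · -- C : inr j, inr h
    rw [covVecT, show (fun q : TPt n => clift X q (Sum.inr h))
        = fun q : TPt n => ∑ s, q.2 s * pd (fun z => X z h) s q.1 from rfl,
      pdT_fiberSum_inr (fun s => hpdXd h s), Fintype.sum_sum_type]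
    simp [GammaTilde, clift, covVec]
  · -- C : inl j, inr h  (hard case)
    rw [covVecT, show (fun q : TPt n => clift X q (Sum.inr h))
        = fun q : TPt n => ∑ s, q.2 s * pd (fun z => X z h) s q.1 from rfl,
      pdT_fiberSum_inl (fun s => hpdXd h s), Fintype.sum_sum_type]
    simp only [GammaTilde, clift]
    have hswap : ∑ s, p.2 s * pd (fun z => pd (fun w => X w h) s z) j p.1
        = ∑ s, p.2 s * pd (pd (fun w => X w h) j) s p.1 :=
      Finset.sum_congr rfl fun s _ => by rw [pd_comm (hX h) s j]
    have hcov : ∑ s, p.2 s * pd (fun z => covVec g ginv X j h z) s p.1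
        = ∑ s, p.2 s * (pd (pd (fun w => X w h) j) s p.1
            + ∑ i, (pd (fun z => Christoffel g ginv h j i z) s p.1 * X p.1 i
                + Christoffel g ginv h j i p.1 * pd (fun w => X w i) s p.1)) := by
      refine Finset.sum_congr rfl fun s _ => ?_
      congr 1
      have e : (fun z => covVec g ginv X j h z)
          = fun z => pd (fun w => X w h) j z + ∑ i, Christoffel g ginv h j i z * X z i := rfl
      rw [e, pd_add (hpdXd h j) (DifferentiableAt.fun_sum fun i _ => (hΓd h j i).fun_mul (hXd i)) s,
        pd_sum Finset.univ (fun i _ => (hΓd h j i).fun_mul (hXd i)) s]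
      congr 1
      exact Finset.sum_congr rfl fun i _ => pd_mul (hΓd h j i) (hXd i) s
    rw [hswap, hcov]
    exact alg7 p.2 (fun s => pd (pd (fun w => X w h) j) s p.1)
      (fun i => Hcoef g ginv a h j i p.1) (fun i => X p.1 i)
      (fun i => Christoffel g ginv h j i p.1)
      (fun i t => pd (fun z => Christoffel g ginv h j i z) t p.1)
      (fun k i => Riem g ginv k j i h p.1)
      (fun i s => pd (fun w => X w i) s p.1)
  · -- C : inr j, inl h
    rw [covVecT, show (fun q : TPt n => clift X q (Sum.inl h)) = fun q : TPt n => X q.1 h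
      from rfl, pdT_base_inr (hXd h), Fintype.sum_sum_type]
    simp [GammaTilde, clift]
  · -- H : inl j, inl h
    rw [covVecT, show (fun q : TPt n => hlift g ginv X q (Sum.inl h)) = fun q : TPt n => X q.1 h
      from rfl, pdT_base_inl (hXd h), Fintype.sum_sum_type]
    simp [GammaTilde, hlift, covVec]
  · -- H : inl j, inr h  (hard case)
    rw [covVecT, hhl h, pdT_neg, pdT_fiberSum_inl (fun s => hΓXd h s), Fintype.sum_sum_type]
    simp only [GammaTilde, hlift, Riem, covVec]
    have hpd : ∑ s, p.2 s * pd (fun z => ∑ i, Christoffel g ginv h s i z * X z i) j p.1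
        = ∑ s, p.2 s * (∑ i, (pd (fun z => Christoffel g ginv h s i z) j p.1 * X p.1 i
            + Christoffel g ginv h s i p.1 * pd (fun w => X w i) j p.1)) := by
      refine Finset.sum_congr rfl fun s _ => ?_
      congr 1
      rw [pd_sum Finset.univ (fun i _ => (hΓd h s i).fun_mul (hXd i)) j]
      exact Finset.sum_congr rfl fun i _ => pd_mul (hΓd h s i) (hXd i) j
    rw [hpd]
    exact alg10 p.2 (fun i => X p.1 i) (fun i => Hcoef g ginv a h j i p.1)
      (fun b c d => Christoffel g ginv b c d p.1)
      (fun b c d k => pd (fun z => Christoffel g ginv b c d z) k p.1)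
      (fun i k => pd (fun w => X w i) k p.1) h j
  · -- H : inr j, inl h
    rw [covVecT, show (fun q : TPt n => hlift g ginv X q (Sum.inl h)) = fun q : TPt n => X q.1 h
      from rfl, pdT_base_inr (hXd h), Fintype.sum_sum_type]
    simp [GammaTilde, hlift]
  · -- H : inr j, inr h
    rw [covVecT, hhl h, pdT_neg, pdT_fiberSum_inr (fun s => hΓXd h s), Fintype.sum_sum_type]
    simp [GammaTilde, hlift, Finset.mul_sum]

end Synectic
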